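/- Let H be a real Hilbert space, f : H → ℝ strongly quasiconvex with value γ > 0 with minimizer x*, let c > 0 and (c_k) a sequence of reals with c_k ≥ c for all k, and let (x^k) be a sequence in H with x^{k+1} ∈ Prox_{c_k f}(x^k) for all k ∈ ℕ. Then f(x^k) converges to f(x*) = min f as k → ∞. -/

import Mathlib

/-!
Testing the proximal step `p` of `x` against the points of the segment from `p` towards a point
`z` with `f z ≤ f p`, and letting the step length tend to `0`, strong quasiconvexity yields
`γ β ‖z - p‖ ≤ 2 ‖p - x‖`. With `z` a minimizer, the triangle inequality and the sufficient
decrease `f p + ‖p - x‖² / (2β) ≤ f x` then bound the optimality gap after a step by a fixed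
multiple `K` of the decrease `f x - f p`, so that the gaps shrink geometrically with ratio
`K / (1 + K)`.
-/

open Filter Topology
open scoped InnerProductSpace

theorem tendsto_zero_of_one_add_mul_succ_le {a : ℕ → ℝ} {K : ℝ} (hK : 0 ≤ K)
    (ha : ∀ n, 0 ≤ a n) (h : ∀ n, (1 + K) * a (n + 1) ≤ K * a n) :
    Tendsto a atTop (𝓝 0) := by
  have hK₁ : 0 < 1 + K := by linarith
  have hq₀ : 0 ≤ K / (1 + K) := by positivity
  have hq₁ : K / (1 + K) < 1 := (div_lt_one hK₁).2 (by linarith)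
  have hstep : ∀ n, a (n + 1) ≤ K / (1 + K) * a n := fun n => by
    rw [div_mul_eq_mul_div, le_div_iff₀ hK₁]
    linarith [h n]
  have hgeom : Tendsto (fun n => (K / (1 + K)) ^ n * a 0) atTop (𝓝 0) := by
    simpa using (tendsto_pow_atTop_nhds_zero_of_lt_one hq₀ hq₁).mul_const (a 0)
  exact squeeze_zero ha (fun n => le_geom hq₀ n fun k _ => hstep k) hgeom

section Prox

variable {E : Type*} [NormedAddCommGroup E]

def IsProxPoint (f : E → ℝ) (β : ℝ) (x p : E) : Prop :=
  ∀ y, f p + 1 / (2 * β) * ‖p - x‖ ^ 2 ≤ f y + 1 / (2 * β) * ‖y - x‖ ^ 2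

theorem IsProxPoint.add_le {f : E → ℝ} {β : ℝ} {x p : E} (hp : IsProxPoint f β x p) :
    f p + 1 / (2 * β) * ‖p - x‖ ^ 2 ≤ f x := by
  simpa using hp x

end Prox

def StronglyQuasiconvex {E : Type*} [NormedAddCommGroup E] [Module ℝ E] (γ : ℝ) (f : E → ℝ) :
    Prop :=
  ∀ x y : E, ∀ t ∈ Set.Icc (0 : ℝ) 1,
    f ((1 - t) • x + t • y) ≤ max (f x) (f y) - t * (1 - t) * (γ / 2) * ‖x - y‖ ^ 2

namespace StronglyQuasiconvex

variable {H : Type*} [NormedAddCommGroup H] [InnerProductSpace ℝ H]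
  {f : H → ℝ} {γ β : ℝ} {x p z : H}

theorem mul_norm_sq_le_inner (hf : StronglyQuasiconvex γ f) (hβ : 0 < β)
    (hp : IsProxPoint f β x p) (hz : f z ≤ f p) :
    γ * β * ‖z - p‖ ^ 2 ≤ 2 * ⟪p - x, z - p⟫_ℝ := by
  have hsegment : ∀ t ∈ Set.Ioc (0 : ℝ) 1,
      (1 - t) * (γ * β * ‖z - p‖ ^ 2) ≤ 2 * ⟪p - x, z - p⟫_ℝ + t * ‖z - p‖ ^ 2 := by
    rintro t ⟨ht₀, ht₁⟩
    have hdecrease := hf p z t ⟨ht₀.le, ht₁⟩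
    rw [max_eq_left hz, norm_sub_rev] at hdecrease
    have hprox := hp ((1 - t) • p + t • z)
    have hexpand : ‖(1 - t) • p + t • z - x‖ ^ 2
        = ‖p - x‖ ^ 2 + 2 * t * ⟪p - x, z - p⟫_ℝ + t ^ 2 * ‖z - p‖ ^ 2 := by
      rw [show (1 - t) • p + t • z - x = (p - x) + t • (z - p) by module, norm_add_sq_real,
        real_inner_smul_right, norm_smul, Real.norm_of_nonneg ht₀.le]
      ring
    rw [hexpand] at hprox
    have h := mul_le_mul_of_nonneg_left (by linarith : t * (1 - t) * (γ / 2) * ‖z - p‖ ^ 2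
      ≤ 1 / (2 * β) * (2 * t * ⟪p - x, z - p⟫_ℝ + t ^ 2 * ‖z - p‖ ^ 2)) (by positivity : 0 ≤ 2 * β)
    field_simp at h
    linarith
  have hlhs : Tendsto (fun t : ℝ => (1 - t) * (γ * β * ‖z - p‖ ^ 2)) (𝓝[>] 0)
      (𝓝 (γ * β * ‖z - p‖ ^ 2)) :=
    tendsto_nhdsWithin_of_tendsto_nhds (Continuous.tendsto' (by fun_prop) 0 _ (by simp))
  have hrhs : Tendsto (fun t : ℝ => 2 * ⟪p - x, z - p⟫_ℝ + t * ‖z - p‖ ^ 2) (𝓝[>] 0)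
      (𝓝 (2 * ⟪p - x, z - p⟫_ℝ)) :=
    tendsto_nhdsWithin_of_tendsto_nhds (Continuous.tendsto' (by fun_prop) 0 _ (by simp))
  exact le_of_tendsto_of_tendsto hlhs hrhs
    (eventually_of_mem (Ioc_mem_nhdsGT zero_lt_one) hsegment)

theorem mul_norm_le_norm (hf : StronglyQuasiconvex γ f) (hβ : 0 < β)
    (hp : IsProxPoint f β x p) (hz : f z ≤ f p) :
    γ * β * ‖z - p‖ ≤ 2 * ‖p - x‖ := by
  rcases (norm_nonneg (z - p)).eq_or_lt with h₀ | hpos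
  · rw [← h₀, mul_zero]
    positivity
  · refine le_of_mul_le_mul_right ?_ hpos
    calc γ * β * ‖z - p‖ * ‖z - p‖ = γ * β * ‖z - p‖ ^ 2 := by ring
      _ ≤ 2 * ⟪p - x, z - p⟫_ℝ := hf.mul_norm_sq_le_inner hβ hp hz
      _ ≤ 2 * (‖p - x‖ * ‖z - p‖) := by gcongr; exact real_inner_le_norm _ _
      _ = 2 * ‖p - x‖ * ‖z - p‖ := by ring

theorem sub_le_mul_sub {c : ℝ} (hf : StronglyQuasiconvex γ f) (hγ : 0 < γ) (hc : 0 < c)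
    (hcβ : c ≤ β) (hp : IsProxPoint f β x p) (hz : f z ≤ f p) :
    f p - f z ≤ ((1 + 2 / (γ * c)) ^ 2 - 1) * (f x - f p) := by
  have hβ : 0 < β := hc.trans_le hcβ
  have hzp : ‖z - p‖ ≤ 2 / (γ * c) * ‖p - x‖ := by
    rw [div_mul_eq_mul_div, le_div_iff₀ (by positivity)]
    calc ‖z - p‖ * (γ * c) = γ * c * ‖z - p‖ := by ring
      _ ≤ γ * β * ‖z - p‖ := by gcongr
      _ ≤ 2 * ‖p - x‖ := hf.mul_norm_le_norm hβ hp hz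
  have hzx : ‖z - x‖ ^ 2 ≤ (1 + 2 / (γ * c)) ^ 2 * ‖p - x‖ ^ 2 := by
    rw [← mul_pow]
    gcongr
    linarith [norm_sub_le_norm_sub_add_norm_sub z p x]
  have hK : 0 ≤ (1 + 2 / (γ * c)) ^ 2 - 1 :=
    sub_nonneg.2 (one_le_pow₀ (le_add_of_nonneg_right (by positivity)))
  calc f p - f z ≤ 1 / (2 * β) * (‖z - x‖ ^ 2 - ‖p - x‖ ^ 2) := by linarith [hp z]
    _ ≤ 1 / (2 * β) * (((1 + 2 / (γ * c)) ^ 2 - 1) * ‖p - x‖ ^ 2) := by gcongr; linarith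
    _ = ((1 + 2 / (γ * c)) ^ 2 - 1) * (1 / (2 * β) * ‖p - x‖ ^ 2) := by ring
    _ ≤ ((1 + 2 / (γ * c)) ^ 2 - 1) * (f x - f p) := by gcongr; linarith [hp.add_le]

end StronglyQuasiconvex

theorem ppa_function_value_convergence_general
    {H : Type*} [NormedAddCommGroup H] [InnerProductSpace ℝ H]
    (f : H → ℝ) (γ : ℝ) (hγ : 0 < γ)
    (hf : ∀ x y : H, ∀ t ∈ Set.Icc (0 : ℝ) 1,
      f ((1 - t) • x + t • y) ≤ max (f x) (f y) - t * (1 - t) * (γ / 2) * ‖x - y‖ ^ 2)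
    (xs : H) (hxs : ∀ y : H, f xs ≤ f y)
    (c : ℝ) (hc : 0 < c) (ck : ℕ → ℝ) (hck : ∀ k, c ≤ ck k)
    (x : ℕ → H)
    (hx : ∀ k : ℕ, ∀ y : H,
      f (x (k + 1)) + (1 / (2 * ck k)) * ‖x (k + 1) - x k‖ ^ 2
        ≤ f y + (1 / (2 * ck k)) * ‖y - x k‖ ^ 2) :
    Filter.Tendsto (fun k => f (x k)) Filter.atTop (nhds (f xs)) := by
  set K := (1 + 2 / (γ * c)) ^ 2 - 1
  have hK : 0 ≤ K := sub_nonneg.2 (one_le_pow₀ (le_add_of_nonneg_right (by positivity)))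
  have hgap : ∀ k, (1 + K) * (f (x (k + 1)) - f xs) ≤ K * (f (x k) - f xs) := fun k => by
    linarith [StronglyQuasiconvex.sub_le_mul_sub hf hγ hc (hck k) (hx k) (hxs _)]
  have hgap_zero := tendsto_zero_of_one_add_mul_succ_le hK (fun k => sub_nonneg.2 (hxs _)) hgap
  simpa using hgap_zero.add_const (f xs)

/-- The function values along the proximal point algorithm for a
strongly quasiconvex function converge to the minimum. -/
theorem ppa_function_value_convergence
    {H : Type*} [NormedAddCommGroup H] [InnerProductSpace ℝ H] [CompleteSpace H]
    (f : H → ℝ) (γ : ℝ) (hγ : 0 < γ)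
    (hf : ∀ x y : H, ∀ t ∈ Set.Icc (0 : ℝ) 1,
      f ((1 - t) • x + t • y) ≤ max (f x) (f y) - t * (1 - t) * (γ / 2) * ‖x - y‖ ^ 2)
    (xs : H) (hxs : ∀ y : H, f xs ≤ f y)
    (c : ℝ) (hc : 0 < c) (ck : ℕ → ℝ) (hck : ∀ k, c ≤ ck k)
    (x : ℕ → H)
    (hx : ∀ k : ℕ, ∀ y : H,
      f (x (k + 1)) + (1 / (2 * ck k)) * ‖x (k + 1) - x k‖ ^ 2
        ≤ f y + (1 / (2 * ck k)) * ‖y - x k‖ ^ 2) :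
    Filter.Tendsto (fun k => f (x k)) Filter.atTop (nhds (f xs)) :=
  ppa_function_value_convergence_general f γ hγ hf xs hxs c hc ck hck x hx
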